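/- Let A be a smooth operator field on an open set U ⊆ ℝⁿ, let c₀, …, c_N : U → ℝ be smooth functions, and let P(A) be the operator field P(A)(x) = Σ_{k=0}^{N} c_k(x) A(x)ᵏ. Let Q_P(z,λ) = Σ_{k=1}^{N} c_k(x) Σ_{p+q=k−1} zᵖ λ^q be the Bézout quotient, so that P(z) − P(λ) = (z−λ)Q_P(z,λ). Then for every integer m ≥ 2 and all smooth vector fields X, Y, τ⁽ᵐ⁾_{P(A)}(X,Y) = R_{(Q_P(z,λ))ᵐ (Q_P(z,μ))ᵐ}(τ⁽ᵐ⁾_A)(X,Y), where the representation R is taken with respect to A and the polynomial (Q_P(z,λ))ᵐ(Q_P(z,μ))ᵐ in the variables (z,λ,μ). -/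

import Mathlib

noncomputable section

/-- Points of ℝⁿ, modeled as `Fin n → ℝ`. -/
abbrev Vec (n : ℕ) := Fin n → ℝ

/-- Vector fields on (an open subset of) ℝⁿ. -/
abbrev VF (n : ℕ) := Vec n → Vec n

/-- Operator fields: smooth (1,1)-tensor fields, i.e. maps U → (ℝⁿ →L[ℝ] ℝⁿ). -/
abbrev OpField (n : ℕ) := Vec n → (Vec n →L[ℝ] Vec n)

/-- Lie bracket of vector fields: [V,W](x) = DW(x)(V(x)) − DV(x)(W(x)). -/
noncomputable def lieBracket {n : ℕ} (V W : VF n) : VF n :=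
  fun x => fderiv ℝ W x (V x) - fderiv ℝ V x (W x)

/-- Action of an operator field on a vector field: (A V)(x) = A(x)(V(x)). -/
noncomputable def opApp {n : ℕ} (A : OpField n) (V : VF n) : VF n := fun x => A x (V x)

/-- Generalized Nijenhuis torsion of level m:
τ⁽⁰⁾_A(V,W) = [V,W] and
τ⁽ᵐ⁾_A(V,W) = A²τ⁽ᵐ⁻¹⁾_A(V,W) + τ⁽ᵐ⁻¹⁾_A(AV,AW) − A(τ⁽ᵐ⁻¹⁾_A(V,AW) + τ⁽ᵐ⁻¹⁾_A(AV,W)).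
Level 1 is the Nijenhuis torsion, level 2 the Haantjes torsion. -/
noncomputable def genTorsion {n : ℕ} (A : OpField n) : ℕ → VF n → VF n → VF n
  | 0, V, W => lieBracket V W
  | (m+1), V, W => fun x =>
      A x (A x (genTorsion A m V W x))
      + genTorsion A m (opApp A V) (opApp A W) x
      - A x (genTorsion A m V (opApp A W) x + genTorsion A m (opApp A V) W x)

/-- The Bogoyavlenskij representation `R_S(T)` of a (1,2)-tensor-like map `T`
with respect to an operator field `A` and a polynomial `S(z,λ,μ)` in three variables
(variable 0 = z, variable 1 = λ, variable 2 = μ) with smooth-function coefficients: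
`R_S(T)(V,W)(x) = Σ s_{ijk}(x) · A(x)ⁱ (T(AʲV, AᵏW)(x))`. -/
noncomputable def rep {n : ℕ} (A : OpField n) (S : MvPolynomial (Fin 3) (Vec n → ℝ))
    (T : VF n → VF n → VF n) : VF n → VF n → VF n :=
  fun V W x => ∑ m ∈ S.support, (MvPolynomial.coeff m S) x •
    ((A x ^ (m 0)) (T (fun y => (A y ^ (m 1)) (V y)) (fun y => (A y ^ (m 2)) (W y)) x))

/-- The polynomial operator field P(A)(x) = Σ_{k=0}^{N} c_k(x)·A(x)ᵏ. -/
noncomputable def polyOp {n : ℕ} (A : OpField n) (c : ℕ → Vec n → ℝ) (N : ℕ) : OpField n :=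
  fun x => ∑ k ∈ Finset.range (N + 1), c k x • A x ^ k

/-- The Bézout quotient Q_P(z, Xᵥ) = Σ_{k=1}^{N} c_k Σ_{p+q=k−1} zᵖ Xᵥ^q, as a polynomial
in the three variables (z = X 0, λ = X 1, μ = X 2); `v` selects λ or μ. -/
noncomputable def bezoutQ {n : ℕ} (c : ℕ → Vec n → ℝ) (N : ℕ) (v : Fin 3) :
    MvPolynomial (Fin 3) (Vec n → ℝ) :=
  ∑ k ∈ Finset.Icc 1 N, MvPolynomial.C (c k) *
    ∑ p ∈ Finset.range k, MvPolynomial.X 0 ^ p * MvPolynomial.X v ^ (k - 1 - p)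

/-!
The representation `R_S(T)` is additive in `S`, and multiplying `S` by `z`, `λ` or `μ` amounts to
letting `A` act on the output, on the first or on the second argument. Hence the recursion
defining the generalized torsions reads `R_S(τ⁽ᵐ⁺¹⁾_A) = R_{(z-λ)(z-μ)S}(τ⁽ᵐ⁾_A)`. For `m ≥ 1`
the torsion `τ⁽ᵐ⁾_A` is tensorial (linear over differentiable functions in each slot), so
`R_S(τ⁽ᵐ⁾_A)` is too, and multiplying `S` by `P(λ)` or `P(μ)` amounts to replacing `X` by
`P(A)X` or `Y` by `P(A)Y`. With the Bézout identity `(z-λ)Q_P(z,λ) = P(z) - P(λ)`, one recursion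
step for `P(A)` applied to `R_S(τ⁽ᵐ⁾_A)` gives `R_{Q_P(z,λ)Q_P(z,μ)S}(τ⁽ᵐ⁺¹⁾_A)`.

The Lie bracket is not tensorial, so at level one the derivatives of the coefficients leave an
error term: with `D_v = Σ_k (∂_v c_k) A^k` and `F(v,w) = D_{P(A)v} w - P(A) D_v w`,
`τ_{P(A)}(X,Y) = R_{Q_P(z,λ)Q_P(z,μ)}(τ_A)(X,Y) + F(X,Y) - F(Y,X)`. As `D_v` commutes with
`P(A)`, `F(v, P(A)w) = P(A)F(v,w)`, and this makes the next recursion step for `P(A)` kill the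
error term; hence the theorem starts at `m = 2`.
-/

open MvPolynomial Finset

variable {n : ℕ}

section OperatorField

variable {U : Set (Vec n)} {A B : OpField n} {c : ℕ → Vec n → ℝ} {N : ℕ} {V : VF n}

lemma opApp_smul_add (A : OpField n) (f : Vec n → ℝ) (V V' : VF n) :
    opApp A (f • V + V') = f • opApp A V + opApp A V' := by
  funext y; simp [opApp]

lemma opApp_one (V : VF n) : opApp (1 : OpField n) V = V := rfl

lemma opApp_pow_add (A : OpField n) (j k : ℕ) (V : VF n) :
    opApp (A ^ (j + k)) V = opApp (A ^ j) (opApp (A ^ k) V) := by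
  funext y; simp [opApp, pow_add, mul_apply_eq_comp]

lemma polyOp_apply (A : OpField n) (c : ℕ → Vec n → ℝ) (N : ℕ) (x u : Vec n) :
    polyOp A c N x u = ∑ k ∈ range (N + 1), c k x • (A x ^ k) u := by
  simp [polyOp]

lemma polyOp_eq_sum (A : OpField n) (c : ℕ → Vec n → ℝ) (N : ℕ) :
    polyOp A c N = ∑ k ∈ range (N + 1), c k • A ^ k := by
  funext y; simp [polyOp]

lemma opApp_polyOp (A : OpField n) (c : ℕ → Vec n → ℝ) (N : ℕ) (V : VF n) :
    opApp (polyOp A c N) V = ∑ k ∈ range (N + 1), c k • opApp (A ^ k) V := by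
  funext y; simp [opApp, polyOp_apply]

lemma DifferentiableOn.opApp (hB : DifferentiableOn ℝ B U) (hV : DifferentiableOn ℝ V U) :
    DifferentiableOn ℝ (opApp B V) U :=
  hB.clm_apply hV

lemma DifferentiableOn.polyOp (hA : DifferentiableOn ℝ A U)
    (hc : ∀ k, DifferentiableOn ℝ (c k) U) : DifferentiableOn ℝ (polyOp A c N) U := by
  rw [polyOp_eq_sum]
  exact DifferentiableOn.sum fun k _ => (hc k).smul (hA.pow k)

end OperatorField

section LieBracket

variable {f : Vec n → ℝ} {V V' W : VF n} {x : Vec n}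

lemma lieBracket_swap (V W : VF n) : lieBracket W V = -lieBracket V W := by
  funext x; simp [lieBracket]

lemma lieBracket_smul_add_left (hf : DifferentiableAt ℝ f x) (hV : DifferentiableAt ℝ V x)
    (hV' : DifferentiableAt ℝ V' x) :
    lieBracket (f • V + V') W x
      = f x • lieBracket V W x - fderiv ℝ f x (W x) • V x + lieBracket V' W x := by
  simp only [lieBracket, fderiv_add (hf.smul hV) hV', fderiv_smul hf hV, Pi.add_apply,
    Pi.smul_apply', add_apply, smul_apply, ContinuousLinearMap.smulRight_apply, map_add,
    map_smul, smul_sub]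
  abel

lemma lieBracket_sum_smul_left {ι : Type*} (s : Finset ι) {g : ι → Vec n → ℝ} {F : ι → VF n}
    (hg : ∀ i ∈ s, DifferentiableAt ℝ (g i) x) (hF : ∀ i ∈ s, DifferentiableAt ℝ (F i) x) :
    lieBracket (∑ i ∈ s, g i • F i) W x
      = ∑ i ∈ s, (g i x • lieBracket (F i) W x - fderiv ℝ (g i) x (W x) • F i x) := by
  rw [lieBracket, fderiv_sum fun i hi => (hg i hi).smul (hF i hi), Finset.sum_apply, map_sum,
    _root_.sum_apply, ← sum_sub_distrib]
  refine sum_congr rfl fun i hi => ?_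
  simp only [lieBracket, fderiv_smul (hg i hi) (hF i hi), Pi.smul_apply', add_apply, smul_apply,
    ContinuousLinearMap.smulRight_apply, map_smul, smul_sub]
  abel

lemma lieBracket_sum_smul_right {ι : Type*} (s : Finset ι) {g : ι → Vec n → ℝ} {F : ι → VF n}
    (hg : ∀ i ∈ s, DifferentiableAt ℝ (g i) x) (hF : ∀ i ∈ s, DifferentiableAt ℝ (F i) x) :
    lieBracket V (∑ i ∈ s, g i • F i) x
      = ∑ i ∈ s, (g i x • lieBracket V (F i) x + fderiv ℝ (g i) x (V x) • F i x) := by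
  simp only [lieBracket_swap _ V, Pi.neg_apply, lieBracket_sum_smul_left s hg hF, ← sum_neg_distrib]
  refine sum_congr rfl fun i _ => ?_
  simp only [lieBracket_swap V, Pi.neg_apply, smul_neg]
  abel

end LieBracket

section Torsion

variable {U : Set (Vec n)}

def torsionStep (A : OpField n) (T : VF n → VF n → VF n) : VF n → VF n → VF n :=
  fun V W x => A x (A x (T V W x)) + T (opApp A V) (opApp A W) x
    - A x (T V (opApp A W) x + T (opApp A V) W x)

lemma genTorsion_succ (A : OpField n) (m : ℕ) :
    genTorsion A (m + 1) = torsionStep A (genTorsion A m) := rfl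

lemma torsionStep_add (A : OpField n) (T T' : VF n → VF n → VF n) (V W : VF n) (x : Vec n) :
    torsionStep A (T + T') V W x = torsionStep A T V W x + torsionStep A T' V W x := by
  simp only [torsionStep, Pi.add_apply, map_add]
  abel

lemma genTorsion_swap (A : OpField n) (m : ℕ) (V W : VF n) :
    genTorsion A m W V = -genTorsion A m V W := by
  induction m generalizing V W with
  | zero => exact lieBracket_swap V W
  | succ m ih =>
    funext x
    simp only [genTorsion_succ, torsionStep, Pi.neg_apply]
    rw [ih V W, ih (opApp A V) (opApp A W), ih (opApp A V) W, ih V (opApp A W)]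
    simp only [Pi.neg_apply, map_neg, map_add]
    abel

lemma torsionStep_congr {B : OpField n} {T T' : VF n → VF n → VF n}
    (hB : DifferentiableOn ℝ B U)
    (h : ∀ V W, DifferentiableOn ℝ V U → DifferentiableOn ℝ W U → ∀ x ∈ U, T V W x = T' V W x)
    {V W : VF n} (hV : DifferentiableOn ℝ V U) (hW : DifferentiableOn ℝ W U) {x : Vec n}
    (hx : x ∈ U) : torsionStep B T V W x = torsionStep B T' V W x := by
  simp only [torsionStep, h V W hV hW x hx, h _ _ (hB.opApp hV) (hB.opApp hW) x hx,
    h _ _ hV (hB.opApp hW) x hx, h _ _ (hB.opApp hV) hW x hx]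

end Torsion

section Tensorial

variable {U : Set (Vec n)} {A : OpField n} {T : VF n → VF n → VF n}

def IsLeftTensorialOn (U : Set (Vec n)) (T : VF n → VF n → VF n) : Prop :=
  ∀ ⦃f : Vec n → ℝ⦄ ⦃V V' W : VF n⦄, DifferentiableOn ℝ f U → DifferentiableOn ℝ V U →
    DifferentiableOn ℝ V' U → DifferentiableOn ℝ W U →
    ∀ x ∈ U, T (f • V + V') W x = f x • T V W x + T V' W x

structure IsTensorialOn (U : Set (Vec n)) (T : VF n → VF n → VF n) : Prop where
  left : IsLeftTensorialOn U T
  right : IsLeftTensorialOn U fun V W => T W V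

namespace IsLeftTensorialOn

lemma neg (hT : IsLeftTensorialOn U T) : IsLeftTensorialOn U (-T) := by
  intro f V V' W hf hV hV' hW x hx
  simp only [Pi.neg_apply, hT hf hV hV' hW x hx, neg_add, smul_neg]

lemma apply_zero (hT : IsLeftTensorialOn U T) {W : VF n} (hW : DifferentiableOn ℝ W U)
    {x : Vec n} (hx : x ∈ U) : T 0 W x = 0 := by
  have h := hT (f := 1) (V := 0) (V' := 0) (differentiableOn_const 1)
    (differentiableOn_const 0) (differentiableOn_const 0) hW x hx
  simpa using h

lemma sum_smul {ι : Type*} (hT : IsLeftTensorialOn U T) (s : Finset ι) {g : ι → Vec n → ℝ}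
    {F : ι → VF n} (hg : ∀ i ∈ s, DifferentiableOn ℝ (g i) U)
    (hF : ∀ i ∈ s, DifferentiableOn ℝ (F i) U) {W : VF n} (hW : DifferentiableOn ℝ W U)
    {x : Vec n} (hx : x ∈ U) :
    T (∑ i ∈ s, g i • F i) W x = ∑ i ∈ s, g i x • T (F i) W x := by
  classical
  induction s using Finset.induction_on with
  | empty => exact hT.apply_zero hW hx
  | insert i s hi ih =>
    simp only [forall_mem_insert] at hg hF
    rw [sum_insert hi, sum_insert hi, hT hg.1 hF.1 (DifferentiableOn.sum fun j hj =>
      (hg.2 j hj).smul (hF.2 j hj)) hW x hx, ih hg.2 hF.2]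

end IsLeftTensorialOn

lemma IsLeftTensorialOn.torsionStep (hA : DifferentiableOn ℝ A U) (hT : IsLeftTensorialOn U T) :
    IsLeftTensorialOn U (torsionStep A T) := by
  intro f V V' W hf hV hV' hW x hx
  have hAV := hA.opApp hV
  have hAV' := hA.opApp hV'
  have hAW := hA.opApp hW
  simp only [_root_.torsionStep, opApp_smul_add, hT hf hV hV' hW x hx,
    hT hf hAV hAV' hAW x hx, hT hf hV hV' hAW x hx, hT hf hAV hAV' hW x hx, map_add, map_smul]
  module

lemma isLeftTensorialOn_nijenhuisTorsion (hU : IsOpen U) (hA : DifferentiableOn ℝ A U) :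
    IsLeftTensorialOn U (genTorsion A 1) := by
  intro f V V' W hf hV hV' hW x hx
  have hd : ∀ {E : Type} [NormedAddCommGroup E] [NormedSpace ℝ E] {g : Vec n → E},
      DifferentiableOn ℝ g U → DifferentiableAt ℝ g x :=
    fun hg => hg.differentiableAt (hU.mem_nhds hx)
  simp only [genTorsion, opApp_smul_add,
    lieBracket_smul_add_left (hd hf) (hd hV) (hd hV'),
    lieBracket_smul_add_left (hd hf) (hd (hA.opApp hV)) (hd (hA.opApp hV'))]
  simp only [opApp, map_add, map_sub, map_smul]
  module

lemma isTensorialOn_genTorsion (hU : IsOpen U) (hA : DifferentiableOn ℝ A U) (m : ℕ) :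
    IsTensorialOn U (genTorsion A (m + 1)) := by
  have hleft : IsLeftTensorialOn U (genTorsion A (m + 1)) := by
    induction m with
    | zero => exact isLeftTensorialOn_nijenhuisTorsion hU hA
    | succ m ih => exact ih.torsionStep hA
  have hswap : (fun V W => genTorsion A (m + 1) W V) = -genTorsion A (m + 1) :=
    funext₂ fun V W => genTorsion_swap A (m + 1) V W
  exact ⟨hleft, hswap ▸ hleft.neg⟩

lemma IsLeftTensorialOn.comp_opApp {B B' : OpField n} (hT : IsLeftTensorialOn U T)
    (hB : DifferentiableOn ℝ B U) (hB' : DifferentiableOn ℝ B' U) :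
    IsLeftTensorialOn U fun V W => T (opApp B V) (opApp B' W) := by
  intro f V V' W hf hV hV' hW x hx
  dsimp only
  rw [opApp_smul_add]
  exact hT hf (hB.opApp hV) (hB.opApp hV') (hB'.opApp hW) x hx

lemma isLeftTensorialOn_sum_apply {ι : Type*} (s : Finset ι) (L : ι → OpField n)
    {T : ι → VF n → VF n → VF n} (hT : ∀ i ∈ s, IsLeftTensorialOn U (T i)) :
    IsLeftTensorialOn U fun V W x => ∑ i ∈ s, L i x (T i V W x) := by
  intro f V V' W hf hV hV' hW x hx
  dsimp only
  rw [smul_sum, ← sum_add_distrib]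
  refine sum_congr rfl fun i hi => ?_
  rw [hT i hi hf hV hV' hW x hx, map_add, map_smul]

lemma isTensorialOn_rep (hA : DifferentiableOn ℝ A U) (hT : IsTensorialOn U T)
    (S : MvPolynomial (Fin 3) (Vec n → ℝ)) : IsTensorialOn U (rep A S T) :=
  ⟨isLeftTensorialOn_sum_apply S.support (fun d x => coeff d S x • A x ^ d 0)
      fun _ _ => hT.left.comp_opApp (hA.pow _) (hA.pow _),
    isLeftTensorialOn_sum_apply S.support (fun d x => coeff d S x • A x ^ d 0)
      fun _ _ => hT.right.comp_opApp (hA.pow _) (hA.pow _)⟩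

end Tensorial

section Representation

variable (A : OpField n) (T : VF n → VF n → VF n) (V W : VF n) (x : Vec n)

def repAddHom : MvPolynomial (Fin 3) (Vec n → ℝ) →+ Vec n :=
  (Finsupp.liftAddHom fun d =>
    { toFun := fun s => s x • (A x ^ d 0) (T (opApp (A ^ d 1) V) (opApp (A ^ d 2) W) x)
      map_zero' := zero_smul ℝ _
      map_add' := fun _ _ => add_smul _ _ _ }).comp
    AddMonoidAlgebra.coeffAddEquiv.toAddMonoidHom

lemma rep_eq_repAddHom (S : MvPolynomial (Fin 3) (Vec n → ℝ)) :
    rep A S T V W x = repAddHom A T V W x S := rfl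

lemma repAddHom_monomial (d : Fin 3 →₀ ℕ) (s : Vec n → ℝ) :
    repAddHom A T V W x (monomial d s)
      = s x • (A x ^ d 0) (T (opApp (A ^ d 1) V) (opApp (A ^ d 2) W) x) := by
  show Finsupp.liftAddHom _ (Finsupp.single d s) = _
  rw [Finsupp.liftAddHom_apply_single]
  rfl

lemma X_pow_mul_monomial (i : Fin 3) (k : ℕ) (d : Fin 3 →₀ ℕ) (s : Vec n → ℝ) :
    (X i ^ k * monomial d s : MvPolynomial (Fin 3) (Vec n → ℝ))
      = monomial (Finsupp.single i k + d) s := by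
  rw [X_pow_eq_monomial, monomial_mul, one_mul]

lemma repAddHom_X_zero_pow_mul (k : ℕ) (S : MvPolynomial (Fin 3) (Vec n → ℝ)) :
    repAddHom A T V W x (X 0 ^ k * S) = (A x ^ k) (repAddHom A T V W x S) := by
  induction S using MvPolynomial.induction_on' with
  | add p q hp hq => rw [mul_add, map_add, map_add, hp, hq, map_add]
  | monomial d s =>
    simp [X_pow_mul_monomial, repAddHom_monomial, pow_add, mul_apply_eq_comp]

lemma repAddHom_X_one_pow_mul (k : ℕ) (S : MvPolynomial (Fin 3) (Vec n → ℝ)) :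
    repAddHom A T V W x (X 1 ^ k * S) = repAddHom A T (opApp (A ^ k) V) W x S := by
  induction S using MvPolynomial.induction_on' with
  | add p q hp hq => rw [mul_add, map_add, map_add, hp, hq]
  | monomial d s =>
    simp [X_pow_mul_monomial, repAddHom_monomial, add_comm k, opApp_pow_add]

lemma repAddHom_X_two_pow_mul (k : ℕ) (S : MvPolynomial (Fin 3) (Vec n → ℝ)) :
    repAddHom A T V W x (X 2 ^ k * S) = repAddHom A T V (opApp (A ^ k) W) x S := by
  induction S using MvPolynomial.induction_on' with
  | add p q hp hq => rw [mul_add, map_add, map_add, hp, hq]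
  | monomial d s =>
    simp [X_pow_mul_monomial, repAddHom_monomial, add_comm k, opApp_pow_add]

lemma repAddHom_C_mul (f : Vec n → ℝ) (S : MvPolynomial (Fin 3) (Vec n → ℝ)) :
    repAddHom A T V W x (C f * S) = f x • repAddHom A T V W x S := by
  induction S using MvPolynomial.induction_on' with
  | add p q hp hq => rw [mul_add, map_add, map_add, hp, hq, smul_add]
  | monomial d s => rw [C_mul_monomial, repAddHom_monomial, repAddHom_monomial, Pi.mul_apply,
      mul_smul]

lemma repAddHom_one : repAddHom A T V W x 1 = T V W x := by
  rw [← C_1, ← monomial_zero', repAddHom_monomial]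
  simp [opApp_one]

lemma repAddHom_X_zero_mul (S : MvPolynomial (Fin 3) (Vec n → ℝ)) :
    repAddHom A T V W x (X 0 * S) = A x (repAddHom A T V W x S) := by
  simpa using repAddHom_X_zero_pow_mul A T V W x 1 S

lemma repAddHom_X_one_mul (S : MvPolynomial (Fin 3) (Vec n → ℝ)) :
    repAddHom A T V W x (X 1 * S) = repAddHom A T (opApp A V) W x S := by
  simpa using repAddHom_X_one_pow_mul A T V W x 1 S

lemma repAddHom_X_two_mul (S : MvPolynomial (Fin 3) (Vec n → ℝ)) :
    repAddHom A T V W x (X 2 * S) = repAddHom A T V (opApp A W) x S := by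
  simpa using repAddHom_X_two_pow_mul A T V W x 1 S

lemma repAddHom_torsionStep (S : MvPolynomial (Fin 3) (Vec n → ℝ)) :
    repAddHom A (torsionStep A T) V W x S
      = repAddHom A T V W x ((X 0 - X 1) * ((X 0 - X 2) * S)) := by
  induction S using MvPolynomial.induction_on generalizing V W with
  | C a =>
    rw [show (X 0 - X 1) * ((X 0 - X 2) * C a) = C a * (X 0 * (X 0 * 1) + X 1 * (X 2 * 1)
        - X 0 * (X 2 * 1 + X 1 * 1) : MvPolynomial (Fin 3) (Vec n → ℝ)) by ring,
      repAddHom_C_mul, ← mul_one (C a), repAddHom_C_mul]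
    simp only [map_add, map_sub, repAddHom_X_zero_mul, repAddHom_X_one_mul, repAddHom_X_two_mul,
      repAddHom_one, torsionStep]
  | add p q hp hq => simp only [mul_add, map_add, hp, hq]
  | mul_X p i ih =>
    obtain rfl | rfl | rfl : i = 0 ∨ i = 1 ∨ i = 2 := by fin_cases i <;> simp
    · rw [mul_comm, repAddHom_X_zero_mul, ih, ← repAddHom_X_zero_mul]
      congr 1; ring
    · rw [mul_comm, repAddHom_X_one_mul, ih, ← repAddHom_X_one_mul]
      congr 1; ring
    · rw [mul_comm, repAddHom_X_two_mul, ih, ← repAddHom_X_two_mul]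
      congr 1; ring

end Representation

section Bezout

variable (A : OpField n) (T : VF n → VF n → VF n) (V W : VF n) (x : Vec n) (c : ℕ → Vec n → ℝ)
  (N : ℕ)

def polyVar (v : Fin 3) : MvPolynomial (Fin 3) (Vec n → ℝ) :=
  ∑ k ∈ range (N + 1), C (c k) * X v ^ k

lemma X_sub_X_mul_bezoutQ (v : Fin 3) :
    (X 0 - X v) * bezoutQ c N v = polyVar c N 0 - polyVar c N v := by
  have hsub : Icc 1 N ⊆ range (N + 1) := fun k hk => by
    simp only [mem_Icc, mem_range] at hk ⊢; omega
  rw [bezoutQ, mul_sum, polyVar, polyVar, ← sum_sub_distrib, ← sum_subset hsub]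
  · refine sum_congr rfl fun k _ => ?_
    rw [mul_left_comm, mul_comm (X 0 - X v), geom_sum₂_mul, mul_sub]
  · intro k hk hk'
    obtain rfl : k = 0 := by simp only [mem_Icc, mem_range] at hk hk'; omega
    simp

lemma repAddHom_polyVar_zero_mul (S : MvPolynomial (Fin 3) (Vec n → ℝ)) :
    repAddHom A T V W x (polyVar c N 0 * S) = polyOp A c N x (repAddHom A T V W x S) := by
  simp [polyVar, sum_mul, mul_assoc, repAddHom_C_mul, repAddHom_X_zero_pow_mul, polyOp_apply]

lemma repAddHom_polyVar_one_mul (S : MvPolynomial (Fin 3) (Vec n → ℝ)) :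
    repAddHom A T V W x (polyVar c N 1 * S)
      = ∑ k ∈ range (N + 1), c k x • repAddHom A T (opApp (A ^ k) V) W x S := by
  simp [polyVar, sum_mul, mul_assoc, repAddHom_C_mul, repAddHom_X_one_pow_mul]

lemma repAddHom_polyVar_two_mul (S : MvPolynomial (Fin 3) (Vec n → ℝ)) :
    repAddHom A T V W x (polyVar c N 2 * S)
      = ∑ k ∈ range (N + 1), c k x • repAddHom A T V (opApp (A ^ k) W) x S := by
  simp [polyVar, sum_mul, mul_assoc, repAddHom_C_mul, repAddHom_X_two_pow_mul]

lemma repAddHom_torsionStep_bezoutQ (S : MvPolynomial (Fin 3) (Vec n → ℝ)) :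
    repAddHom A (torsionStep A T) V W x (bezoutQ c N 1 * bezoutQ c N 2 * S)
      = polyOp A c N x (polyOp A c N x (repAddHom A T V W x S))
        + ∑ k ∈ range (N + 1), c k x • ∑ l ∈ range (N + 1),
            c l x • repAddHom A T (opApp (A ^ k) V) (opApp (A ^ l) W) x S
        - polyOp A c N x (∑ l ∈ range (N + 1), c l x • repAddHom A T V (opApp (A ^ l) W) x S
            + ∑ k ∈ range (N + 1), c k x • repAddHom A T (opApp (A ^ k) V) W x S) := by
  have hpoly : (X 0 - X 1) * ((X 0 - X 2) * (bezoutQ c N 1 * bezoutQ c N 2 * S))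
      = polyVar c N 0 * (polyVar c N 0 * S) + polyVar c N 1 * (polyVar c N 2 * S)
        - polyVar c N 0 * (polyVar c N 2 * S + polyVar c N 1 * S) := by
    linear_combination ((X 0 - X 2) * bezoutQ c N 2 * S) * X_sub_X_mul_bezoutQ c N 1
      + ((polyVar c N 0 - polyVar c N 1) * S) * X_sub_X_mul_bezoutQ c N 2
  rw [repAddHom_torsionStep, hpoly]
  simp only [map_add, map_sub, repAddHom_polyVar_zero_mul, repAddHom_polyVar_one_mul,
    repAddHom_polyVar_two_mul]

end Bezout

section PolyOp

variable {U : Set (Vec n)} {A : OpField n} {T : VF n → VF n → VF n} {c : ℕ → Vec n → ℝ} {N : ℕ}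
  {x : Vec n}

lemma IsTensorialOn.rep_opApp_polyOp_left (hA : DifferentiableOn ℝ A U)
    (hc : ∀ k, DifferentiableOn ℝ (c k) U) (hT : IsTensorialOn U T)
    (S : MvPolynomial (Fin 3) (Vec n → ℝ)) {V W : VF n} (hV : DifferentiableOn ℝ V U)
    (hW : DifferentiableOn ℝ W U) (hx : x ∈ U) :
    rep A S T (opApp (polyOp A c N) V) W x
      = ∑ k ∈ range (N + 1), c k x • rep A S T (opApp (A ^ k) V) W x := by
  rw [opApp_polyOp]
  exact (isTensorialOn_rep hA hT S).left.sum_smul _ (fun k _ => hc k)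
    (fun k _ => (hA.pow k).opApp hV) hW hx

lemma IsTensorialOn.rep_opApp_polyOp_right (hA : DifferentiableOn ℝ A U)
    (hc : ∀ k, DifferentiableOn ℝ (c k) U) (hT : IsTensorialOn U T)
    (S : MvPolynomial (Fin 3) (Vec n → ℝ)) {V W : VF n} (hV : DifferentiableOn ℝ V U)
    (hW : DifferentiableOn ℝ W U) (hx : x ∈ U) :
    rep A S T V (opApp (polyOp A c N) W) x
      = ∑ k ∈ range (N + 1), c k x • rep A S T V (opApp (A ^ k) W) x := by
  rw [opApp_polyOp]
  exact (isTensorialOn_rep hA hT S).right.sum_smul _ (fun k _ => hc k)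
    (fun k _ => (hA.pow k).opApp hW) hV hx

lemma IsTensorialOn.torsionStep_polyOp_rep (hA : DifferentiableOn ℝ A U)
    (hc : ∀ k, DifferentiableOn ℝ (c k) U) (hT : IsTensorialOn U T)
    (S : MvPolynomial (Fin 3) (Vec n → ℝ)) {V W : VF n} (hV : DifferentiableOn ℝ V U)
    (hW : DifferentiableOn ℝ W U) (hx : x ∈ U) :
    torsionStep (polyOp A c N) (rep A S T) V W x
      = rep A (bezoutQ c N 1 * bezoutQ c N 2 * S) (torsionStep A T) V W x := by
  have hPW := (DifferentiableOn.polyOp (N := N) hA hc).opApp hW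
  rw [torsionStep, rep_eq_repAddHom (S := bezoutQ c N 1 * bezoutQ c N 2 * S),
    repAddHom_torsionStep_bezoutQ,
    hT.rep_opApp_polyOp_left hA hc S hV hPW hx, hT.rep_opApp_polyOp_left hA hc S hV hW hx,
    hT.rep_opApp_polyOp_right hA hc S hV hW hx]
  simp only [hT.rep_opApp_polyOp_right hA hc S ((hA.pow _).opApp hV) hW hx]
  rfl

variable (A c N x) in
def polyOpCoeffDeriv : Vec n →L[ℝ] Vec n →L[ℝ] Vec n :=
  ∑ k ∈ range (N + 1), (fderiv ℝ (c k) x).smulRight (A x ^ k)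

variable (A c N x) in
def polyOpDefect (v w : Vec n) : Vec n :=
  polyOpCoeffDeriv A c N x (polyOp A c N x v) w - polyOp A c N x (polyOpCoeffDeriv A c N x v w)

lemma polyOpCoeffDeriv_apply (u : Vec n) :
    polyOpCoeffDeriv A c N x u = ∑ k ∈ range (N + 1), fderiv ℝ (c k) x u • A x ^ k := by
  simp [polyOpCoeffDeriv]

lemma polyOpCoeffDeriv_apply_polyOp (u w : Vec n) :
    polyOpCoeffDeriv A c N x u (polyOp A c N x w)
      = polyOp A c N x (polyOpCoeffDeriv A c N x u w) := by
  have h : Commute (polyOpCoeffDeriv A c N x u) (polyOp A c N x) := by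
    rw [polyOpCoeffDeriv_apply, polyOp]
    exact Commute.sum_left _ _ _ fun k _ => Commute.sum_right _ _ _ fun l _ =>
      ((Commute.pow_pow_self (A x) k l).smul_left _).smul_right _
  rw [← mul_apply_eq_comp, h.eq, mul_apply_eq_comp]

lemma polyOpDefect_apply_polyOp (v w : Vec n) :
    polyOpDefect A c N x v (polyOp A c N x w) = polyOp A c N x (polyOpDefect A c N x v w) := by
  simp only [polyOpDefect, polyOpCoeffDeriv_apply_polyOp, map_sub]

variable (A c N) in
def polyOpError : VF n → VF n → VF n :=
  fun V W y => polyOpDefect A c N y (V y) (W y) - polyOpDefect A c N y (W y) (V y)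

lemma torsionStep_polyOp_polyOpError (V W : VF n) :
    torsionStep (polyOp A c N) (polyOpError A c N) V W x = 0 := by
  simp only [torsionStep, polyOpError, opApp, polyOpDefect_apply_polyOp, map_sub, map_add]
  abel

lemma lieBracket_opApp_polyOp_left (hU : IsOpen U) (hA : DifferentiableOn ℝ A U)
    (hc : ∀ k, DifferentiableOn ℝ (c k) U) {V W : VF n} (hV : DifferentiableOn ℝ V U)
    (hx : x ∈ U) :
    lieBracket (opApp (polyOp A c N) V) W x
      = ∑ k ∈ range (N + 1), c k x • lieBracket (opApp (A ^ k) V) W x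
        - polyOpCoeffDeriv A c N x (W x) (V x) := by
  rw [opApp_polyOp, lieBracket_sum_smul_left _
      (fun k _ => (hc k).differentiableAt (hU.mem_nhds hx))
      (fun k _ => ((hA.pow k).opApp hV).differentiableAt (hU.mem_nhds hx)),
    sum_sub_distrib, polyOpCoeffDeriv_apply, _root_.sum_apply]
  rfl

lemma lieBracket_opApp_polyOp_right (hU : IsOpen U) (hA : DifferentiableOn ℝ A U)
    (hc : ∀ k, DifferentiableOn ℝ (c k) U) {V W : VF n} (hW : DifferentiableOn ℝ W U)
    (hx : x ∈ U) :
    lieBracket V (opApp (polyOp A c N) W) x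
      = ∑ k ∈ range (N + 1), c k x • lieBracket V (opApp (A ^ k) W) x
        + polyOpCoeffDeriv A c N x (V x) (W x) := by
  rw [opApp_polyOp, lieBracket_sum_smul_right _
      (fun k _ => (hc k).differentiableAt (hU.mem_nhds hx))
      (fun k _ => ((hA.pow k).opApp hW).differentiableAt (hU.mem_nhds hx)),
    sum_add_distrib, polyOpCoeffDeriv_apply, _root_.sum_apply]
  rfl

lemma nijenhuisTorsion_polyOp (hU : IsOpen U) (hA : DifferentiableOn ℝ A U)
    (hc : ∀ k, DifferentiableOn ℝ (c k) U) {V W : VF n} (hV : DifferentiableOn ℝ V U)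
    (hW : DifferentiableOn ℝ W U) (hx : x ∈ U) :
    genTorsion (polyOp A c N) 1 V W x
      = (rep A (bezoutQ c N 1 * bezoutQ c N 2) (genTorsion A 1) + polyOpError A c N) V W x := by
  have hPW : opApp (polyOp A c N) W x = polyOp A c N x (W x) := rfl
  have hD : ∑ k ∈ range (N + 1), c k x • polyOpCoeffDeriv A c N x (opApp (A ^ k) V x) (W x)
      = polyOpCoeffDeriv A c N x (polyOp A c N x (V x)) (W x) := by
    simp [polyOp_apply, opApp]
  rw [Pi.add_apply, Pi.add_apply, Pi.add_apply, polyOpError, rep_eq_repAddHom,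
    ← mul_one (bezoutQ c N 1 * bezoutQ c N 2), genTorsion_succ A 0,
    repAddHom_torsionStep_bezoutQ, genTorsion_succ, torsionStep]
  simp only [genTorsion, repAddHom_one,
    lieBracket_opApp_polyOp_left hU hA hc hV hx, lieBracket_opApp_polyOp_right hU hA hc hW hx,
    smul_add, sum_add_distrib, hD, hPW, polyOpDefect, map_add, map_sub]
  abel

lemma genTorsion_polyOp_eq_rep_of_differentiableOn (hU : IsOpen U)
    (hA : DifferentiableOn ℝ A U) (hc : ∀ k, DifferentiableOn ℝ (c k) U) {m : ℕ} (hm : 2 ≤ m)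
    {V W : VF n} (hV : DifferentiableOn ℝ V U) (hW : DifferentiableOn ℝ W U) (hx : x ∈ U) :
    genTorsion (polyOp A c N) m V W x
      = rep A (bezoutQ c N 1 ^ m * bezoutQ c N 2 ^ m) (genTorsion A m) V W x := by
  have hP := DifferentiableOn.polyOp (N := N) hA hc
  induction m, hm using Nat.le_induction generalizing V W x with
  | base =>
    rw [genTorsion_succ, torsionStep_congr hP
        (fun V W hV hW x hx => nijenhuisTorsion_polyOp hU hA hc hV hW hx) hV hW hx,
      torsionStep_add, torsionStep_polyOp_polyOpError, add_zero,
      (isTensorialOn_genTorsion hU hA 0).torsionStep_polyOp_rep hA hc _ hV hW hx,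
      ← genTorsion_succ, show bezoutQ c N 1 * bezoutQ c N 2 * (bezoutQ c N 1 * bezoutQ c N 2)
        = bezoutQ c N 1 ^ 2 * bezoutQ c N 2 ^ 2 by ring]
  | succ m hm ih =>
    obtain ⟨k, rfl⟩ : ∃ k, m = k + 1 := ⟨m - 1, by omega⟩
    rw [genTorsion_succ, torsionStep_congr (T' := rep A (bezoutQ c N 1 ^ (k + 1)
        * bezoutQ c N 2 ^ (k + 1)) (genTorsion A (k + 1))) hP
        (fun V W hV hW x hx => ih hV hW hx) hV hW hx,
      (isTensorialOn_genTorsion hU hA k).torsionStep_polyOp_rep hA hc _ hV hW hx,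
      ← genTorsion_succ, ← mul_mul_mul_comm, ← pow_succ', ← pow_succ']

end PolyOp

/-- for m ≥ 2,
τ⁽ᵐ⁾_{P(A)}(X,Y) = R_{(Q_P(z,λ))ᵐ(Q_P(z,μ))ᵐ}(τ⁽ᵐ⁾_A)(X,Y), the representation taken
with respect to A. -/
theorem genTorsion_polyOp_eq_rep {n : ℕ} (U : Set (Vec n)) (hU : IsOpen U)
    (A : OpField n) (hA : ContDiffOn ℝ (⊤ : ℕ∞) A U)
    (N : ℕ) (c : ℕ → Vec n → ℝ) (hc : ∀ k, ContDiffOn ℝ (⊤ : ℕ∞) (c k) U)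
    (m : ℕ) (hm : 2 ≤ m) :
    ∀ X Y : VF n, ContDiffOn ℝ (⊤ : ℕ∞) X U → ContDiffOn ℝ (⊤ : ℕ∞) Y U →
      ∀ x ∈ U,
        genTorsion (polyOp A c N) m X Y x =
          rep A (bezoutQ c N 1 ^ m * bezoutQ c N 2 ^ m) (genTorsion A m) X Y x := by
  intro X Y hX hY x hx
  exact genTorsion_polyOp_eq_rep_of_differentiableOn hU (hA.differentiableOn (by simp))
    (fun k => (hc k).differentiableOn (by simp)) hm (hX.differentiableOn (by simp))
    (hY.differentiableOn (by simp)) hx
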